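/- arXiv:2409.18650 — 2 statements merged into one kernel-verified Lean document; each statement's English description precedes it below -/
import Mathlib

section
/- For every x ∈ c_c and every sufficiently large n ∈ ℕ, one has f(x + (2/n)·e_n) − f(x) ≥ 1/4, where e_n is the n-th standard unit sequence, while ‖(2/n)·e_n‖ → 0 as n → ∞. -/
open scoped ENNReal

noncomputable section

abbrev ell2 : Type := lp (fun _ : ℕ => ℝ) 2

lemma memℓp_of_finite_support {x : ℕ → ℝ} (h : (Function.support x).Finite) :
    Memℓp x 2 := by
  apply memℓp_gen
  apply summable_of_finite_support
  refine h.subset ?_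
  intro n hn
  simp only [Function.mem_support] at hn ⊢
  intro h0
  exact hn (by simp [h0])

def ccSubmodule : Submodule ℝ ell2 where
  carrier := {x | (Function.support fun n => (x : ℕ → ℝ) n).Finite}
  add_mem' := by
    intro a b ha hb
    refine Set.Finite.subset (ha.union hb) ?_
    intro n hn
    simp only [Function.mem_support, Set.mem_union] at hn ⊢
    by_contra h
    push_neg at h
    exact hn (by simp [lp.coeFn_add, h.1, h.2])
  zero_mem' := by
    simp only [Set.mem_setOf_eq]
    convert Set.finite_empty
    ext n
    simp [lp.coeFn_zero]
  smul_mem' := by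
    intro c a ha
    refine Set.Finite.subset ha ?_
    intro n hn
    simp only [Function.mem_support] at hn ⊢
    intro h
    exact hn (by simp [lp.coeFn_smul, h])

abbrev cc : Type := ccSubmodule

def seqOf (x : cc) : ℕ → ℝ := fun n => ((x : ell2) : ℕ → ℝ) n

def fSeq (x : ℕ → ℝ) : ℝ :=
  ∑' n : ℕ, (((n : ℝ) + 1) ^ 2 / 2) * (x n - (((n : ℝ) + 1) ^ 2)⁻¹) ^ 2

def fcc (x : cc) : ℝ := fSeq (seqOf x)

/-- The standard unit sequence `e_n` as an element of `c_c`. -/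
def eVec (n : ℕ) : cc :=
  ⟨lp.single 2 n (1 : ℝ), by
    refine Set.Finite.subset (Set.finite_singleton n) ?_
    intro m hm
    simp only [Function.mem_support] at hm
    by_contra hmn
    exact hm (lp.single_apply_ne 2 n _ (by simpa using hmn))⟩

/-- The backward-difference operation on raw sequences, with `x_{-1} := 0`. -/
def Aseq (x : ℕ → ℝ) : ℕ → ℝ := fun n => x n - (if n = 0 then 0 else x (n - 1))

lemma support_Aseq {x : ℕ → ℝ} (h : (Function.support x).Finite) :
    (Function.support (Aseq x)).Finite := by
  refine Set.Finite.subset (h.union (h.image (· + 1))) ?_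
  intro n hn
  simp only [Function.mem_support, Aseq] at hn
  by_contra hc
  simp only [Set.mem_union, Function.mem_support, Set.mem_image, not_or, not_exists] at hc
  obtain ⟨h1, h2⟩ := hc
  apply hn
  rcases n with _ | m
  · simpa using h1
  · have hx1 : x (m + 1) = 0 := not_not.mp h1
    have hx : x m = 0 := by
      by_contra hxm
      exact (h2 m ⟨hxm, rfl⟩).elim
    simp [hx1, hx]

lemma mem_ccSubmodule_of_mk {x : ℕ → ℝ} (hx : Memℓp x 2)
    (h : (Function.support x).Finite) : (⟨x, hx⟩ : ell2) ∈ ccSubmodule := h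

/-- The operator `A : c_c → c_c`, `(Ax)_n = x_n - x_{n-1}` (with `x_{-1} := 0`). -/
def Aop (x : cc) : cc :=
  ⟨⟨Aseq (seqOf x), memℓp_of_finite_support (support_Aseq x.2)⟩,
    mem_ccSubmodule_of_mk _ (support_Aseq x.2)⟩

/-- The Fenchel conjugate of `f`, as a function on `ℓ²`. -/
def fstar (y : ell2) : ℝ :=
  ∑' n : ℕ, (((n : ℝ) + 1) ^ 2)⁻¹ *
    ((1 / 2) * ((y : ℕ → ℝ) n) ^ 2 + (y : ℕ → ℝ) n)

/-- The (formal) adjoint of `A`, acting on `ℓ²` sequences: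
`(A*y)_n = y_n - y_{n+1}`. -/
def AstarSeq (y : ell2) : ℕ → ℝ := fun n => (y : ℕ → ℝ) n - (y : ℕ → ℝ) (n + 1)

/-! Adding `c • e_n` to a finitely supported `x` changes only the `n`-th summand of `f`, and when
`x_n = 0` it changes it by `(n²/2) c² - c`, which for `c = 2/n` is `2 - 2/n ≥ 1`. The series
defining `f x` converges because its summands agree with `1/(2n²)` off the support of `x`. -/

theorem tsum_sub_tsum_of_eq_off {ι G : Type*} [AddCommGroup G] [TopologicalSpace G]
    [IsTopologicalAddGroup G] [T2Space G] {f g : ι → G} (hf : Summable f) (hg : Summable g) {i : ι}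
    (h : ∀ j ≠ i, f j = g j) : ∑' j, f j - ∑' j, g j = f i - g i := by
  rw [← hf.tsum_sub hg]
  exact tsum_eq_single i fun j hj => sub_eq_zero.mpr (h j hj)

def fTerm (n : ℕ) (a : ℝ) : ℝ := (((n : ℝ) + 1) ^ 2 / 2) * (a - (((n : ℝ) + 1) ^ 2)⁻¹) ^ 2

theorem fSeq_eq_tsum_fTerm (x : ℕ → ℝ) : fSeq x = ∑' n, fTerm n (x n) := rfl

theorem fTerm_zero (n : ℕ) : fTerm n 0 = 2⁻¹ * (((n : ℝ) + 1) ^ 2)⁻¹ := by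
  rw [fTerm]
  field_simp
  ring

theorem fTerm_sub_fTerm_zero (n : ℕ) (a : ℝ) :
    fTerm n a - fTerm n 0 = ((n : ℝ) + 1) ^ 2 / 2 * a ^ 2 - a := by
  simp only [fTerm]
  field_simp
  ring

theorem summable_fTerm_zero : Summable fun n : ℕ => fTerm n 0 := by
  simp only [fTerm_zero]
  refine Summable.mul_left _ ?_
  exact_mod_cast (summable_nat_add_iff 1).mpr (Real.summable_nat_pow_inv.mpr one_lt_two)

theorem summable_fTerm_of_finite_support {x : ℕ → ℝ} (hx : (Function.support x).Finite) :
    Summable fun n => fTerm n (x n) :=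
  summable_fTerm_zero.congr_cofinite <| hx.subset fun n hn h0 => hn (congrArg (fTerm n) h0.symm)

theorem fSeq_add_single_sub {x : ℕ → ℝ} (hx : (Function.support x).Finite) (n : ℕ) (c : ℝ) :
    fSeq (x + Pi.single n c) - fSeq x = fTerm n (x n + c) - fTerm n (x n) := by
  have hxc : (Function.support (x + Pi.single n c)).Finite :=
    (hx.union (Set.finite_singleton n)).subset <| (Function.support_add _ _).trans <|
      Set.union_subset_union_right _ Pi.support_single_subset
  rw [fSeq_eq_tsum_fTerm, fSeq_eq_tsum_fTerm,
    tsum_sub_tsum_of_eq_off (summable_fTerm_of_finite_support hxc)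
      (summable_fTerm_of_finite_support hx) (i := n) fun m hm => by simp [hm]]
  simp

theorem seqOf_add_smul_eVec (x : cc) (c : ℝ) (n : ℕ) :
    seqOf (x + c • eVec n) = seqOf x + Pi.single n c := by
  ext m
  simp only [seqOf, eVec, Submodule.coe_add, Submodule.coe_smul, lp.coeFn_add, lp.coeFn_smul,
    lp.coeFn_single, Pi.add_apply, Pi.smul_apply, smul_eq_mul, Pi.single_apply, mul_ite,
    mul_one, mul_zero]

theorem norm_eVec (n : ℕ) : ‖eVec n‖ = 1 := by
  rw [← norm_one (α := ℝ)]
  exact lp.norm_single (E := fun _ : ℕ => ℝ) two_pos n 1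

-- The index `n : ℕ` stands for the paper's `n + 1`.
/-- for every `x` and all large `n`,
`f (x + (2/n) e_n) - f x ≥ 1/4`, while `‖(2/n) e_n‖ → 0`.
(Here the index `n : ℕ` corresponds to the paper's `n + 1`.) -/
theorem f_jump_along_null_sequence :
    (∀ x : cc, ∃ N : ℕ, ∀ n ≥ N,
      fcc (x + (2 / ((n : ℝ) + 1)) • eVec n) - fcc x ≥ 1 / 4) ∧
    Filter.Tendsto (fun n : ℕ => ‖(2 / ((n : ℝ) + 1)) • eVec n‖)
      Filter.atTop (nhds 0) := by
  refine ⟨fun x => ?_, ?_⟩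
  · obtain ⟨b, hb⟩ := x.2.bddAbove
    refine ⟨b + 1, fun n hn => ?_⟩
    have hxn : seqOf x n = 0 := Function.notMem_support.mp fun h => by linarith [hb h]
    have hn1 : (1 : ℝ) ≤ n := by exact_mod_cast (Nat.le_add_left 1 b).trans hn
    have hjump : fcc (x + (2 / ((n : ℝ) + 1)) • eVec n) - fcc x = 2 - 2 / ((n : ℝ) + 1) := by
      rw [fcc, fcc, seqOf_add_smul_eVec, fSeq_add_single_sub (x := seqOf x) x.2, hxn, zero_add,
        fTerm_sub_fTerm_zero]
      field_simp
    rw [hjump, ge_iff_le, le_sub_comm, div_le_iff₀ (by positivity)]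
    linarith
  · have hnorm (n : ℕ) : ‖(2 / ((n : ℝ) + 1)) • eVec n‖ = 2 / ((n : ℝ) + 1) := by
      rw [norm_smul, norm_eVec, mul_one, Real.norm_of_nonneg (by positivity)]
    simp only [hnorm]
    simpa [div_eq_mul_inv] using tendsto_one_div_add_atTop_nhds_zero_nat.const_mul (2 : ℝ)
end
end

section
/- The convex chain rule fails at 0: ∂(f∘A)(0) = {0}, whereas A*∂f(A0) = ∅, where A* : ℓ² → ℓ² is the adjoint of A. -/
open scoped ENNReal

noncomputable section

/-!
Write `c n = (n + 1) ^ 2` for the weights of `f`. For finitely supported `x` the sum of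
`(A x) n` over `n ≤ N` telescopes to `x N = 0`, so the linear part of `f` vanishes along the
range of `A` and `f (A x) = f 0 + ∑ (c n / 2) (A x)_n ^ 2`: a nonnegative quadratic form. Hence
`0` is a subgradient of `f ∘ A` at `0`, and every subgradient, being bounded above by a
`2`-homogeneous function, vanishes.

A subgradient `φ` of `f` at `0 = A 0` instead satisfies `φ (e k) ≤ -1/2` for every `k`
(test it against `e k / c k`), so `φ (e 0 + ⋯ + e (N - 1)) ≤ -N/2` while that vector has norm `√N`;
no bounded functional does this.
-/

open Finset

lemma eq_zero_of_forall_mul_le_mul_sq {v C : ℝ} (h : ∀ t : ℝ, t * v ≤ C * t ^ 2) : v = 0 := by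
  have hC : 0 ≤ C := by linarith [h 1, h (-1)]
  have hs := h (v / (2 * (C + 1)))
  rw [← sub_nonneg] at hs
  field_simp at hs
  nlinarith [sq_nonneg v]

lemma LinearMap.eq_zero_of_forall_le_of_sq_smul {E : Type*} [AddCommGroup E] [Module ℝ E]
    (φ : E →ₗ[ℝ] ℝ) {q : E → ℝ} (hq : ∀ (t : ℝ) (y : E), q (t • y) = t ^ 2 * q y)
    (h : ∀ y, φ y ≤ q y) : φ = 0 :=
  LinearMap.ext fun y => eq_zero_of_forall_mul_le_mul_sq (C := q y) fun t => by
    simpa [hq, mul_comm] using h (t • y)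

lemma ContinuousLinearMap.mul_sqrt_card_le_opNorm {E ι : Type*} [SeminormedAddCommGroup E]
    [NormedSpace ℝ E] (φ : E →L[ℝ] ℝ) {e : ι → E} {δ : ℝ} (hφ : ∀ k, δ ≤ φ (e k))
    {s : Finset ι} (hs : ‖∑ k ∈ s, e k‖ ≤ √(#s)) : δ * √(#s) ≤ ‖φ‖ := by
  rcases s.eq_empty_or_nonempty with rfl | hne
  · simp
  have hpos : 0 < √(#s : ℝ) := by simpa using hne.card_pos
  refine le_of_mul_le_mul_right ?_ hpos
  calc δ * √(#s) * √(#s) = ∑ _k ∈ s, δ := by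
        rw [sum_const, nsmul_eq_mul, mul_assoc, Real.mul_self_sqrt (Nat.cast_nonneg _), mul_comm]
    _ ≤ ∑ k ∈ s, φ (e k) := sum_le_sum fun k _ => hφ k
    _ = φ (∑ k ∈ s, e k) := (map_sum φ e s).symm
    _ ≤ ‖φ‖ * ‖∑ k ∈ s, e k‖ := (le_abs_self _).trans (φ.le_opNorm _)
    _ ≤ ‖φ‖ * √(#s) := by gcongr

lemma summable_inv_succ_sq : Summable fun n : ℕ => (((n : ℝ) + 1) ^ 2)⁻¹ := by
  simpa using (summable_nat_add_iff 1).mpr (Real.summable_nat_pow_inv.mpr one_lt_two)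

lemma fSeq_eq_add_sum {x : ℕ → ℝ} {s : Finset ℕ} (hx : ∀ n ∉ s, x n = 0) :
    fSeq x = fSeq 0 + ∑ n ∈ s, (((n : ℝ) + 1) ^ 2 / 2 * x n ^ 2 - x n) := by
  have hterm : ∀ (z : ℕ → ℝ) (n : ℕ),
      ((n : ℝ) + 1) ^ 2 / 2 * (z n - (((n : ℝ) + 1) ^ 2)⁻¹) ^ 2
        = (((n : ℝ) + 1) ^ 2)⁻¹ / 2 + (((n : ℝ) + 1) ^ 2 / 2 * z n ^ 2 - z n) := by
    intro z n
    field_simp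
    ring
  have hfin : ∀ n ∉ s, ((n : ℝ) + 1) ^ 2 / 2 * x n ^ 2 - x n = 0 := by
    intro n hn
    simp [hx n hn]
  simp_rw [fSeq, hterm]
  rw [(summable_inv_succ_sq.div_const 2).tsum_add (summable_of_ne_finset_zero hfin),
    tsum_eq_sum hfin]
  simp

lemma sum_range_succ_Aseq (x : ℕ → ℝ) (N : ℕ) : ∑ n ∈ range (N + 1), Aseq x n = x N := by
  rw [sum_range_succ']
  simp only [Aseq, Nat.add_one_ne_zero, if_false, add_tsub_cancel_right, if_true, sum_range_sub]
  ring

lemma Aseq_smul (t : ℝ) (x : ℕ → ℝ) : Aseq (t • x) = t • Aseq x := by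
  ext n
  simp only [Aseq, Pi.smul_apply, smul_eq_mul]
  split_ifs <;> ring

lemma exists_seqOf_eq_zero (y : cc) : ∃ N, ∀ n, N ≤ n → seqOf y n = 0 := by
  obtain ⟨M, hM⟩ := y.2.bddAbove
  exact ⟨M + 1, fun n hn => by_contra fun h => absurd (hM h) (by omega)⟩

lemma seqOf_zero : seqOf 0 = 0 := rfl

lemma seqOf_smul (t : ℝ) (y : cc) : seqOf (t • y) = t • seqOf y := rfl

lemma seqOf_smul_eVec (t : ℝ) (k : ℕ) : seqOf (t • eVec k) = Pi.single k t := by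
  ext n
  rw [seqOf_smul, Pi.smul_apply, seqOf, eVec, lp.single_apply]
  rcases eq_or_ne n k with rfl | h <;> simp [*]

lemma seqOf_injective : Function.Injective seqOf := fun _ _ h => Subtype.ext (lp.ext h)

lemma seqOf_Aop (y : cc) : seqOf (Aop y) = Aseq (seqOf y) := rfl

lemma Aop_zero : Aop 0 = 0 :=
  seqOf_injective <| funext fun n => by simp [seqOf_Aop, seqOf_zero, Aseq]

lemma fcc_Aop_zero : fcc (Aop 0) = fSeq 0 := by
  simp [fcc, Aop_zero, seqOf_zero]

lemma fcc_Aop (y : cc) :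
    fcc (Aop y) = fSeq 0 + ∑' n : ℕ, ((n : ℝ) + 1) ^ 2 / 2 * Aseq (seqOf y) n ^ 2 := by
  obtain ⟨N, hN⟩ := exists_seqOf_eq_zero y
  have hsupp : ∀ n ∉ range (N + 1), Aseq (seqOf y) n = 0 := by
    intro n hn
    rw [mem_range, not_lt] at hn
    simp [Aseq, hN n (by omega), hN (n - 1) (by omega)]
  have hquad : ∀ n ∉ range (N + 1), ((n : ℝ) + 1) ^ 2 / 2 * Aseq (seqOf y) n ^ 2 = 0 := by
    intro n hn
    simp [hsupp n hn]
  rw [fcc, seqOf_Aop, fSeq_eq_add_sum hsupp, sum_sub_distrib, sum_range_succ_Aseq, hN N le_rfl, sub_zero,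
    tsum_eq_sum hquad]

lemma fcc_smul_eVec (t : ℝ) (k : ℕ) :
    fcc (t • eVec k) = fSeq 0 + (((k : ℝ) + 1) ^ 2 / 2 * t ^ 2 - t) := by
  have hsupp : ∀ n ∉ ({k} : Finset ℕ), seqOf (t • eVec k) n = 0 := by
    intro n hn
    rw [seqOf_smul_eVec, Pi.single_eq_of_ne (by simpa using hn)]
  rw [fcc, fSeq_eq_add_sum hsupp, sum_singleton, seqOf_smul_eVec, Pi.single_eq_same]

lemma norm_sum_eVec (s : Finset ℕ) : ‖∑ k ∈ s, eVec k‖ = √(#s) := by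
  have h := lp.norm_sum_single (p := 2) (by norm_num) (fun _ : ℕ => (1 : ℝ)) s
  have hcoe : ((∑ k ∈ s, eVec k : cc) : ell2) = ∑ k ∈ s, lp.single 2 k (1 : ℝ) := by
    simp [eVec]
  rw [Submodule.coe_norm, hcoe, eq_comm, Real.sqrt_eq_iff_eq_sq (by positivity) (norm_nonneg _)]
  simpa using h.symm

lemma fSeq_zero_le_fcc_Aop (y : cc) : fSeq 0 ≤ fcc (Aop y) := by
  rw [fcc_Aop]
  exact le_add_of_nonneg_right (tsum_nonneg fun n => by positivity)

lemma fcc_Aop_smul (t : ℝ) (y : cc) :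
    fcc (Aop (t • y)) - fSeq 0 = t ^ 2 * (fcc (Aop y) - fSeq 0) := by
  simp only [fcc_Aop, add_sub_cancel_left, seqOf_smul, Aseq_smul, Pi.smul_apply, smul_eq_mul,
    ← tsum_mul_left]
  exact tsum_congr fun n => by ring

lemma apply_eVec_le_of_forall_le_fcc (xs : cc →L[ℝ] ℝ) (h : ∀ y, fSeq 0 + xs y ≤ fcc y)
    (k : ℕ) : xs (eVec k) ≤ -(1 / 2) := by
  set a : ℝ := (((k : ℝ) + 1) ^ 2)⁻¹
  have ha : 0 < a := by positivity
  have hk := h (a • eVec k)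
  rw [fcc_smul_eVec, map_smul, smul_eq_mul] at hk
  have hval : ((k : ℝ) + 1) ^ 2 / 2 * a ^ 2 - a = a * -(1 / 2) := by
    have hca : ((k : ℝ) + 1) ^ 2 * a = 1 := mul_inv_cancel₀ (by positivity)
    linear_combination a / 2 * hca
  exact le_of_mul_le_mul_left (by linarith) ha

lemma not_forall_le_fcc (xs : cc →L[ℝ] ℝ) : ¬ ∀ y, fSeq 0 + xs y ≤ fcc y := by
  intro h
  have hneg (k : ℕ) : 1 / 2 ≤ (-xs) (eVec k) := by
    rw [neg_apply]
    linarith [apply_eVec_le_of_forall_le_fcc xs h k]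
  have hbound (N : ℕ) : 1 / 2 * √N ≤ ‖xs‖ := by
    have := (-xs).mul_sqrt_card_le_opNorm hneg (s := range N) (norm_sum_eVec _).le
    rwa [card_range, ContinuousLinearMap.opNorm_neg] at this
  obtain ⟨m, hm⟩ := exists_nat_gt (2 * ‖xs‖)
  have := hbound (m ^ 2)
  rw [Nat.cast_pow, Real.sqrt_sq (Nat.cast_nonneg m)] at this
  linarith

/-- the chain rule fails at `0`: `∂(f ∘ A)(0) = {0}` while
`A* ∂f(A0) = ∅` (the adjoint `A*` acts on a functional by precomposition
with `A`, under the identification of the dual of `c_c` with `ℓ²`). -/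
theorem chain_rule_fails :
    {xs : cc →L[ℝ] ℝ | ∀ y : cc, fcc (Aop y) ≥ fcc (Aop 0) + xs (y - 0)}
      = {0} ∧
    {z : cc → ℝ | ∃ xs : cc →L[ℝ] ℝ,
      (∀ y : cc, fcc y ≥ fcc (Aop 0) + xs (y - Aop 0)) ∧
      z = fun w : cc => xs (Aop w)} = ∅ := by
  rw [fcc_Aop_zero]
  simp only [Aop_zero, sub_zero, ge_iff_le]
  refine ⟨Set.ext fun xs => ⟨fun h => ?_, ?_⟩, Set.eq_empty_of_forall_notMem ?_⟩
  · refine ContinuousLinearMap.coe_injective <|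
      LinearMap.eq_zero_of_forall_le_of_sq_smul (q := fun y => fcc (Aop y) - fSeq 0)
        (xs : cc →ₗ[ℝ] ℝ) fcc_Aop_smul fun y => ?_
    simpa [le_sub_iff_add_le'] using h y
  · rintro rfl y
    simpa using fSeq_zero_le_fcc_Aop y
  · rintro z ⟨xs, hxs, -⟩
    exact not_forall_le_fcc xs hxs
end
end
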